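/- The total number of walks of length n with steps E=(1,0), W=(-1,0), NW=(-1,1), SE=(1,-1) confined to the quarter plane equals (2m)!(2m+1)!/(m!^2 (m+1)!^2) if n = 2m, and (2m+1)!(2m+2)!/(m!(m+1)!^2 (m+2)!) if n = 2m+1. -/

import Mathlib

/-!
In the coordinates `a = x + 1`, `b = x + 2y + 3` the four steps become the diagonal steps
`(±1, ±1)`, i.e. two independent simple walks, and the quarter plane becomes the Weyl chamber
`0 < a < b` of type `B₂`. The reflection principle for the eight-element group generated by
`a ↦ -a` and `a ↔ b` counts the walks from `(1, 3)` to `(a, b)` as a signed sum of products of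
binomial coefficients (`weylCount`). Summing over all endpoints telescopes first in `y`, then
in `x`, leaving `c₀² + c₁² - c₂² - c₁c₃`, where `c_t = lineWalks n t = binom(n, (n + t)/2)`
counts simple walks of length `n` ending at `t`; by parity two of these terms vanish.
-/

/-- Number of quarter-plane walks of length `n` with steps in `S`, starting at `(0,0)`,
staying in the quarter plane, with arbitrary endpoint. -/
noncomputable def qwalkTotal (S : Set (ℤ × ℤ)) (n : ℕ) : ℕ :=
  Nat.card {w : Fin (n + 1) → ℤ × ℤ //
    w 0 = (0, 0) ∧
    (∀ i : Fin n, w i.succ - w i.castSucc ∈ S) ∧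
    (∀ i, 0 ≤ (w i).1 ∧ 0 ≤ (w i).2)}

open Finset

section Walks

variable {G : Type*} [AddCommGroup G] (S R : Set G)

def walks (n : ℕ) : Type _ :=
  {w : Fin (n + 1) → G // w 0 = 0 ∧ (∀ i : Fin n, w i.succ - w i.castSucc ∈ S) ∧ ∀ i, w i ∈ R}

def walksTo (n : ℕ) (p : G) : Type _ :=
  {w : Fin (n + 1) → G //
    w 0 = 0 ∧ (∀ i : Fin n, w i.succ - w i.castSucc ∈ S) ∧ (∀ i, w i ∈ R) ∧ w (Fin.last n) = p}

noncomputable def walkCount (n : ℕ) (p : G) : ℕ := Nat.card (walksTo S R n p)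

variable {S R}

instance walksTo.subsingleton_zero (p : G) : Subsingleton (walksTo S R 0 p) :=
  ⟨fun w w' => Subtype.ext <| funext fun i => by rw [Fin.fin_one_eq_zero i, w.2.1, w'.2.1]⟩

lemma walksTo.isEmpty_of_notMem {p : G} (hp : p ∉ R) (n : ℕ) : IsEmpty (walksTo S R n p) :=
  ⟨fun w => hp (w.2.2.2.2 ▸ w.2.2.2.1 _)⟩

def walksToSuccEquiv (n : ℕ) {p : G} (hp : p ∈ R) :
    walksTo S R (n + 1) p ≃ Σ s : S, walksTo S R n (p - s) where
  toFun := fun ⟨w, h0, hS, hR, hw⟩ =>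
    ⟨⟨p - w (Fin.last n).castSucc, by simpa [← hw] using hS (Fin.last n)⟩,
      ⟨Fin.init w, h0, fun i => hS i.castSucc, fun i => hR _, by simp [Fin.init]⟩⟩
  invFun := fun ⟨⟨s, hs⟩, ⟨w, h0, hS, hR, hw⟩⟩ =>
    ⟨Fin.snoc w p, by rw [Fin.snoc_apply_zero]; exact h0, by
      intro i
      induction i using Fin.lastCases with
      | last => simpa [hw] using hs
      | cast j => rw [Fin.succ_castSucc, Fin.snoc_castSucc, Fin.snoc_castSucc]; exact hS j, by
      intro i
      induction i using Fin.lastCases with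
      | last => simpa using hp
      | cast j => simpa using hR j, by simp⟩
  left_inv := by
    rintro ⟨w, h0, hS, hR, rfl⟩
    exact Subtype.ext (Fin.snoc_init_self w)
  right_inv := by
    rintro ⟨⟨s, hs⟩, ⟨w, h0, hS, hR, hw⟩⟩
    exact Sigma.subtype_ext (Subtype.ext <| by simp [hw]) (by simp)

instance walksTo.finite [Finite S] (n : ℕ) (p : G) : Finite (walksTo S R n p) := by
  induction n generalizing p with
  | zero => infer_instance
  | succ n ih =>
    by_cases hp : p ∈ R
    · exact Finite.of_equiv _ (walksToSuccEquiv n hp).symm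
    · have := walksTo.isEmpty_of_notMem (S := S) hp (n + 1)
      infer_instance

lemma walkCount_zero [DecidableEq G] (h0 : (0 : G) ∈ R) (p : G) :
    walkCount S R 0 p = if p = 0 then 1 else 0 := by
  split_ifs with hp
  · subst hp
    exact Nat.card_eq_one_iff_unique.2
      ⟨inferInstance, ⟨⟨fun _ => 0, rfl, Fin.elim0, fun _ => h0, rfl⟩⟩⟩
  · have : IsEmpty (walksTo S R 0 p) := ⟨fun w => hp (w.2.2.2.2.symm.trans w.2.1)⟩
    exact Nat.card_of_isEmpty

lemma walkCount_of_notMem {p : G} (hp : p ∉ R) (n : ℕ) : walkCount S R n p = 0 :=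
  have := walksTo.isEmpty_of_notMem (S := S) hp n
  Nat.card_of_isEmpty

lemma walkCount_succ {S : Finset G} (n : ℕ) {p : G} (hp : p ∈ R) :
    walkCount S R (n + 1) p = ∑ s ∈ S, walkCount S R n (p - s) := by
  rw [walkCount, Nat.card_congr (walksToSuccEquiv n hp), Nat.card_sigma]
  exact Finset.sum_finset_coe (fun s => walkCount S R n (p - s)) S

def walksEquivSigma (n : ℕ) (T : Finset G) (hT : ∀ w : walks S R n, w.1 (Fin.last n) ∈ T) :
    walks S R n ≃ Σ q : T, walksTo S R n q where
  toFun w := ⟨⟨w.1 (Fin.last n), hT w⟩, ⟨w.1, w.2.1, w.2.2.1, w.2.2.2, rfl⟩⟩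
  invFun qw := ⟨qw.2.1, qw.2.2.1, qw.2.2.2.1, qw.2.2.2.2.1⟩
  left_inv _ := rfl
  right_inv := by
    rintro ⟨⟨q, hq⟩, ⟨w, h0, hS, hR, hw⟩⟩
    exact Sigma.subtype_ext (Subtype.ext hw) rfl

lemma card_walks_eq_sum [Finite S] (n : ℕ) (T : Finset G)
    (hT : ∀ w : walks S R n, w.1 (Fin.last n) ∈ T) :
    Nat.card (walks S R n) = ∑ q ∈ T, walkCount S R n q := by
  rw [Nat.card_congr (walksEquivSigma n T hT), Nat.card_sigma]
  exact Finset.sum_finset_coe (walkCount S R n) T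

lemma walk_le_nsmul [PartialOrder G] [IsOrderedAddMonoid G] {c : G} (hS : ∀ s ∈ S, s ≤ c)
    {n : ℕ} (w : walks S R n) (i : Fin (n + 1)) : w.1 i ≤ (i : ℕ) • c := by
  induction i using Fin.induction with
  | zero => simp [w.2.1]
  | succ j ih =>
    have := add_le_add ih (hS _ (w.2.2.1 j))
    simpa [succ_nsmul] using this

end Walks

lemma Finset.sum_range_sub_shift {M : Type*} [AddCommGroup M] (f : ℕ → M) (k N : ℕ)
    (hf : ∀ i ≥ N, f i = 0) : ∑ i ∈ range N, (f i - f (i + k)) = ∑ i ∈ range k, f i := by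
  have hsplit := sum_range_add f k N
  rw [add_comm k N, sum_range_add f N k, sum_eq_zero fun i _ => hf (N + i) (by omega)] at hsplit
  simp only [sum_sub_distrib, add_comm _ k]
  rw [add_zero] at hsplit
  rw [hsplit, add_sub_cancel_right]

def lineWalks : ℕ → ℤ → ℤ
  | 0, t => if t = 0 then 1 else 0
  | n + 1, t => lineWalks n (t - 1) + lineWalks n (t + 1)

lemma lineWalks_neg (n : ℕ) (t : ℤ) : lineWalks n (-t) = lineWalks n t := by
  induction n generalizing t with
  | zero => simp [lineWalks]
  | succ n ih =>
    rw [lineWalks, lineWalks, show -t - 1 = -(t + 1) by ring, show -t + 1 = -(t - 1) by ring,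
      ih, ih, add_comm]

lemma lineWalks_eq_zero_of_lt {n : ℕ} {t : ℤ} (h : (n : ℤ) < t) : lineWalks n t = 0 := by
  induction n generalizing t with
  | zero => rw [lineWalks, if_neg (by omega)]
  | succ n ih => rw [lineWalks, ih (by omega), ih (by omega), add_zero]

lemma lineWalks_eq_zero_of_odd {n : ℕ} {t : ℤ} (h : Odd ((n : ℤ) + t)) : lineWalks n t = 0 := by
  rw [Int.odd_iff] at h
  induction n generalizing t with
  | zero => rw [lineWalks, if_neg (by omega)]
  | succ n ih => rw [lineWalks, ih (by omega), ih (by omega), add_zero]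

lemma lineWalks_eq_choose {n k : ℕ} {t : ℤ} (h : (n : ℤ) + t = 2 * k) :
    lineWalks n t = n.choose k := by
  induction n generalizing k t with
  | zero => cases k <;> simp [lineWalks] <;> omega
  | succ n ih =>
    rw [lineWalks]
    cases k with
    | zero =>
      rw [← lineWalks_neg, lineWalks_eq_zero_of_lt (by omega), ih (k := 0) (by omega)]
      simp
    | succ k =>
      rw [ih (k := k) (by omega), ih (k := k + 1) (by push_cast at h ⊢; omega),
        Nat.choose_succ_succ]
      push_cast
      ring

def reflWalks (n s : ℕ) (t : ℤ) : ℤ := lineWalks n (t - s) - lineWalks n (t + s)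

lemma reflWalks_succ (n s : ℕ) (t : ℤ) :
    reflWalks (n + 1) s t = reflWalks n s (t - 1) + reflWalks n s (t + 1) := by
  simp only [reflWalks, lineWalks]
  ring_nf

lemma reflWalks_zero_right (n s : ℕ) : reflWalks n s 0 = 0 := by
  rw [reflWalks, zero_sub, lineWalks_neg, zero_add, sub_self]

lemma sum_reflWalks (n s : ℕ) {x : ℤ} (hx : 0 ≤ x) :
    ∑ y ∈ range (n + 1), reflWalks n s (x + 2 * y + s) =
      ∑ j ∈ range s, lineWalks n (x + 2 * j) := by
  have hvanish : ∀ j ≥ n + 1, lineWalks n (x + 2 * j) = 0 := fun j hj =>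
    lineWalks_eq_zero_of_lt (by omega)
  rw [← sum_range_sub_shift _ s _ hvanish]
  refine sum_congr rfl fun y _ => ?_
  rw [reflWalks]
  push_cast
  ring_nf

def weylCount (n : ℕ) (a b : ℤ) : ℤ :=
  reflWalks n 3 b * reflWalks n 1 a - reflWalks n 1 b * reflWalks n 3 a

lemma weylCount_succ (n : ℕ) (a b : ℤ) :
    weylCount (n + 1) a b = weylCount n (a - 1) (b - 1) + weylCount n (a + 1) (b - 1) +
      weylCount n (a - 1) (b + 1) + weylCount n (a + 1) (b + 1) := by
  simp only [weylCount, reflWalks_succ]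
  ring

lemma weylCount_zero_left (n : ℕ) (b : ℤ) : weylCount n 0 b = 0 := by
  simp [weylCount, reflWalks_zero_right]

lemma weylCount_self (n : ℕ) (a : ℤ) : weylCount n a a = 0 := by
  rw [weylCount, mul_comm, sub_self]

lemma weylCount_zero {x y : ℤ} (hx : 0 ≤ x) (hy : 0 ≤ y) :
    weylCount 0 (x + 1) (x + 2 * y + 3) = if x = 0 ∧ y = 0 then 1 else 0 := by
  simp only [weylCount, reflWalks, lineWalks]
  split_ifs <;> omega

lemma sum_weylCount_row (n : ℕ) {x : ℤ} (hx : 0 ≤ x) :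
    ∑ y ∈ range (n + 1), weylCount n (x + 1) (x + 2 * y + 3) =
      (lineWalks n x ^ 2 - lineWalks n (x - 2) * lineWalks n (x + 2)) -
        (lineWalks n (x + 2) ^ 2 - lineWalks n x * lineWalks n (x + 4)) := by
  have h3 : ∑ y ∈ range (n + 1), reflWalks n 3 (x + 2 * y + 3) =
      lineWalks n x + lineWalks n (x + 2) + lineWalks n (x + 4) := by
    have := sum_reflWalks n 3 hx
    push_cast at this
    rw [this]
    simp [sum_range_succ]
  have h1 : ∑ y ∈ range (n + 1), reflWalks n 1 (x + 2 * y + 3) = lineWalks n (x + 2) := by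
    simp_rw [show ∀ y : ℤ, x + 2 * y + 3 = x + 2 + 2 * y + ((1 : ℕ) : ℤ) by intro; push_cast; ring]
    rw [sum_reflWalks n 1 (by omega), sum_range_one]
    simp
  simp only [weylCount, sum_sub_distrib, ← sum_mul]
  rw [h3, h1]
  simp only [reflWalks]
  ring_nf

lemma sum_weylCount (n : ℕ) :
    ∑ x ∈ range (n + 1), ∑ y ∈ range (n + 1), weylCount n (x + 1) (x + 2 * y + 3) =
      lineWalks n 0 ^ 2 + lineWalks n 1 ^ 2 - lineWalks n 2 ^ 2 -
        lineWalks n 1 * lineWalks n 3 := by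
  set F : ℕ → ℤ := fun j => lineWalks n j ^ 2 - lineWalks n (j - 2) * lineWalks n (j + 2)
  have hF : ∀ j ≥ n + 1, F j = 0 := fun j hj => by
    simp only [F, lineWalks_eq_zero_of_lt (by omega : (n : ℤ) < j),
      lineWalks_eq_zero_of_lt (by omega : (n : ℤ) < j + 2)]
    ring
  calc _ = ∑ x ∈ range (n + 1), (F x - F (x + 2)) := sum_congr rfl fun x _ => by
          rw [sum_weylCount_row n (Nat.cast_nonneg x)]
          simp only [F]
          push_cast
          ring_nf
    _ = F 0 + F 1 := by rw [sum_range_sub_shift F 2 (n + 1) hF]; simp [sum_range_succ]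
    _ = _ := by
      simp only [F]
      rw [show ((0 : ℕ) : ℤ) - 2 = -2 by norm_num, show ((1 : ℕ) : ℤ) - 2 = -1 by norm_num,
        lineWalks_neg, lineWalks_neg]
      push_cast
      ring

def quadrant : Set (ℤ × ℤ) := {p | 0 ≤ p.1 ∧ 0 ≤ p.2}

def stepsEWNWSE : Finset (ℤ × ℤ) := {(1, 0), (-1, 0), (-1, 1), (1, -1)}

local notation "qwalkCount" => walkCount (stepsEWNWSE : Set (ℤ × ℤ)) quadrant

lemma qwalkCount_succ (n : ℕ) {x y : ℤ} (hx : 0 ≤ x) (hy : 0 ≤ y) :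
    qwalkCount (n + 1) (x, y) = qwalkCount n (x - 1, y) + qwalkCount n (x + 1, y) +
      qwalkCount n (x + 1, y - 1) + qwalkCount n (x - 1, y + 1) := by
  rw [walkCount_succ n (show (x, y) ∈ quadrant from ⟨hx, hy⟩), stepsEWNWSE,
    sum_insert (by decide), sum_insert (by decide), sum_insert (by decide), sum_singleton]
  simp only [Prod.mk_sub_mk, sub_zero, sub_neg_eq_add]
  ring_nf

lemma qwalkCount_eq_weylCount_of_boundary (n : ℕ) {x y : ℤ} (h : x = -1 ∨ y = -1) :
    (qwalkCount n (x, y) : ℤ) = weylCount n (x + 1) (x + 2 * y + 3) := by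
  rw [walkCount_of_notMem (p := (x, y)) (fun hq : 0 ≤ x ∧ 0 ≤ y => by omega), Nat.cast_zero]
  rcases h with rfl | rfl
  · simpa using (weylCount_zero_left n _).symm
  · rw [show x + 2 * -1 + 3 = x + 1 by ring, weylCount_self]

lemma qwalkCount_eq_weylCount (n : ℕ) {x y : ℤ} (hx : -1 ≤ x) (hy : -1 ≤ y) :
    (qwalkCount n (x, y) : ℤ) = weylCount n (x + 1) (x + 2 * y + 3) := by
  induction n generalizing x y with
  | zero =>
    obtain ⟨hx, hy⟩ | h : (0 ≤ x ∧ 0 ≤ y) ∨ (x = -1 ∨ y = -1) := by omega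
    · rw [walkCount_zero (show (0 : ℤ × ℤ) ∈ quadrant from ⟨le_rfl, le_rfl⟩), weylCount_zero hx hy]
      simp [Prod.ext_iff]
    · exact qwalkCount_eq_weylCount_of_boundary 0 h
  | succ n ih =>
    obtain ⟨hx, hy⟩ | h : (0 ≤ x ∧ 0 ≤ y) ∨ (x = -1 ∨ y = -1) := by omega
    · rw [qwalkCount_succ n hx hy, weylCount_succ]
      push_cast
      rw [ih (by omega) (by omega), ih (by omega) (by omega), ih (by omega) (by omega),
        ih (by omega) (by omega)]
      ring_nf
    · exact qwalkCount_eq_weylCount_of_boundary (n + 1) h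

lemma walks_quadrant_last_mem {n : ℕ} (w : walks (stepsEWNWSE : Set (ℤ × ℤ)) quadrant n) :
    w.1 (Fin.last n) ∈ (range (n + 1) ×ˢ range (n + 1)).map
      (Nat.castEmbedding.prodMap Nat.castEmbedding) := by
  have hle := walk_le_nsmul (c := ((1 : ℤ), (1 : ℤ)))
    (by simp [stepsEWNWSE, Prod.le_def]) w (Fin.last n)
  obtain ⟨hx, hy⟩ := w.2.2.2 (Fin.last n)
  simp only [Fin.val_last, Prod.le_def, Prod.smul_mk, nsmul_eq_mul, mul_one] at hle
  refine mem_map.2 ⟨((w.1 (Fin.last n)).1.toNat, (w.1 (Fin.last n)).2.toNat), ?_, ?_⟩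
  · simp only [mem_product, mem_range]
    omega
  · ext <;> simp <;> omega

lemma qwalkTotal_eq (n : ℕ) :
    (qwalkTotal {(1, 0), (-1, 0), (-1, 1), (1, -1)} n : ℤ) =
      lineWalks n 0 ^ 2 + lineWalks n 1 ^ 2 - lineWalks n 2 ^ 2 -
        lineWalks n 1 * lineWalks n 3 := by
  have hS : ({(1, 0), (-1, 0), (-1, 1), (1, -1)} : Set (ℤ × ℤ)) = stepsEWNWSE := by
    simp [stepsEWNWSE]
  rw [hS]
  change ((Nat.card (walks (stepsEWNWSE : Set (ℤ × ℤ)) quadrant n) : ℕ) : ℤ) = _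
  rw [card_walks_eq_sum n _ walks_quadrant_last_mem, sum_map, sum_product, ← sum_weylCount]
  push_cast
  refine sum_congr rfl fun x _ => sum_congr rfl fun y _ => ?_
  simp only [Function.Embedding.coe_prodMap, Prod.map_apply, Nat.castEmbedding_apply]
  exact qwalkCount_eq_weylCount n (by omega) (by omega)

lemma qwalkTotal_even (m : ℕ) :
    qwalkTotal {(1, 0), (-1, 0), (-1, 1), (1, -1)} (2 * m) *
        (Nat.factorial m ^ 2 * Nat.factorial (m + 1) ^ 2) =
      Nat.factorial (2 * m) * Nat.factorial (2 * m + 1) := by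
  have h0 : lineWalks (2 * m) 0 = (2 * m).choose m := lineWalks_eq_choose (by push_cast; ring)
  have h1 : lineWalks (2 * m) 1 = 0 := lineWalks_eq_zero_of_odd ⟨m, by push_cast; ring⟩
  have h2 : lineWalks (2 * m) 2 = (2 * m).choose (m + 1) := lineWalks_eq_choose (by push_cast; ring)
  have hT := qwalkTotal_eq (2 * m)
  rw [h0, h1, h2] at hT
  have hratio := Nat.choose_succ_right_eq (2 * m) m
  have hfact := Nat.choose_mul_factorial_mul_factorial (by omega : m ≤ 2 * m)
  rw [show 2 * m - m = m by omega] at hratio hfact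
  apply Nat.cast_injective (R := ℤ)
  rw [Nat.factorial_succ m, Nat.factorial_succ (2 * m)]
  zify at hratio hfact
  push_cast at hT hratio hfact ⊢
  rw [hT]
  set a : ℤ := ((2 * m).choose m : ℤ)
  set b : ℤ := ((2 * m).choose (m + 1) : ℤ)
  set f : ℤ := (m.factorial : ℤ)
  set X : ℤ := ((2 * m).factorial : ℤ)
  linear_combination -f ^ 4 * (a * m + b * (m + 1)) * hratio + (2 * m + 1) * (a * f ^ 2 + X) * hfact

lemma qwalkTotal_odd (m : ℕ) :
    qwalkTotal {(1, 0), (-1, 0), (-1, 1), (1, -1)} (2 * m + 1) *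
        (Nat.factorial m * Nat.factorial (m + 1) ^ 2 * Nat.factorial (m + 2)) =
      Nat.factorial (2 * m + 1) * Nat.factorial (2 * m + 2) := by
  have h0 : lineWalks (2 * m + 1) 0 = 0 := lineWalks_eq_zero_of_odd ⟨m, by push_cast; ring⟩
  have h1 : lineWalks (2 * m + 1) 1 = (2 * m + 1).choose (m + 1) :=
    lineWalks_eq_choose (by push_cast; ring)
  have h2 : lineWalks (2 * m + 1) 2 = 0 := lineWalks_eq_zero_of_odd ⟨m + 1, by push_cast; ring⟩
  have h3 : lineWalks (2 * m + 1) 3 = (2 * m + 1).choose (m + 2) :=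
    lineWalks_eq_choose (by push_cast; ring)
  have hT := qwalkTotal_eq (2 * m + 1)
  rw [h0, h1, h2, h3] at hT
  have hratio := Nat.choose_succ_right_eq (2 * m + 1) (m + 1)
  have hfact := Nat.choose_mul_factorial_mul_factorial (by omega : m + 1 ≤ 2 * m + 1)
  rw [show 2 * m + 1 - (m + 1) = m by omega] at hratio hfact
  apply Nat.cast_injective (R := ℤ)
  rw [Nat.factorial_succ m] at hfact
  rw [Nat.factorial_succ (m + 1), Nat.factorial_succ m, Nat.factorial_succ (2 * m + 1)]
  zify at hratio hfact
  push_cast at hT hratio hfact ⊢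
  rw [hT]
  set a : ℤ := ((2 * m + 1).choose (m + 1) : ℤ)
  set b : ℤ := ((2 * m + 1).choose (m + 2) : ℤ)
  set f : ℤ := (m.factorial : ℤ)
  set X : ℤ := ((2 * m + 1).factorial : ℤ)
  linear_combination
    2 * (m + 1) * (a * (m + 1) * f ^ 2 + X) * hfact - (m + 1) ^ 3 * f ^ 4 * a * hratio

theorem walks_EWNWSE_total (m : ℕ) :
    qwalkTotal {(1, 0), (-1, 0), (-1, 1), (1, -1)} (2 * m) *
        (Nat.factorial m ^ 2 * Nat.factorial (m + 1) ^ 2) =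
      Nat.factorial (2 * m) * Nat.factorial (2 * m + 1) ∧
    qwalkTotal {(1, 0), (-1, 0), (-1, 1), (1, -1)} (2 * m + 1) *
        (Nat.factorial m * Nat.factorial (m + 1) ^ 2 * Nat.factorial (m + 2)) =
      Nat.factorial (2 * m + 1) * Nat.factorial (2 * m + 2) :=
  ⟨qwalkTotal_even m, qwalkTotal_odd m⟩
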